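/- Let D ≥ 1 and let h_{αβ} be a smooth symmetric tensor field on ℝ^D (h_{αβ} = h_{βα}) whose linearized Riemann tensor vanishes identically: ∂_μ∂_α h_{νβ} − ∂_ν∂_α h_{μβ} − ∂_μ∂_β h_{να} + ∂_ν∂_β h_{μα} = 0 on ℝ^D for all μ, ν, α, β. Then there exists a smooth field ξ_α on ℝ^D such that h_{αβ} = ∂_α ξ_β + ∂_β ξ_α for all α, β. -/

import Mathlib

/-- The partial derivative `∂_μ f` of a function `f : ℝ^D → ℝ`. -/
noncomputable def pd {D : ℕ} (μ : Fin D) (f : (Fin D → ℝ) → ℝ) : (Fin D → ℝ) → ℝ :=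
  fun x => fderiv ℝ f x (Pi.single μ 1)

/-- The linearized Riemann tensor of a rank-2 tensor field `h` on `ℝ^D`:
`R[h]_{μναβ} = ∂_μ∂_α h_{νβ} − ∂_ν∂_α h_{μβ} − ∂_μ∂_β h_{να} + ∂_ν∂_β h_{μα}`. -/
noncomputable def linRiemann {D : ℕ} (h : Fin D → Fin D → (Fin D → ℝ) → ℝ)
    (μ ν α β : Fin D) : (Fin D → ℝ) → ℝ := fun x =>
  pd μ (pd α (h ν β)) x - pd ν (pd α (h μ β)) x
    - pd μ (pd β (h ν α)) x + pd ν (pd β (h μ α)) x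

/-!
With `K_{μνγ} = ∂_μ h_{νγ} − ∂_ν h_{μγ}`, the linearized Riemann tensor is
`∂_α K_{μνβ} − ∂_β K_{μνα}`, so flatness says that every `K_{μν•}` is a closed 1-form.
By the Poincaré lemma on the convex set `ℝ^D`, `K_{μνγ} = ∂_γ m_{μν}` for a field `m`
which can be taken antisymmetric since `K` is. Symmetry of `h` then makes
`½ (h_{μβ} + m_{μβ})` closed in `μ`, hence equal to `∂_μ ξ_β`, and the antisymmetric part
drops out of `∂_α ξ_β + ∂_β ξ_α`.
-/

open scoped ContDiff

theorem ContinuousLinearMap.apply_comm_of_apply_single_comm {𝕜 F ι : Type*}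
    [NontriviallyNormedField 𝕜] [NormedAddCommGroup F] [NormedSpace 𝕜 F]
    [Fintype ι] [DecidableEq ι] (B : (ι → 𝕜) →L[𝕜] (ι → 𝕜) →L[𝕜] F)
    (hB : ∀ i j, B (Pi.single i 1) (Pi.single j 1) = B (Pi.single j 1) (Pi.single i 1))
    (a b : ι → 𝕜) : B a b = B b a := by
  have h := LinearMap.ext_basis (Pi.basisFun 𝕜 ι) (Pi.basisFun 𝕜 ι)
    (B := ContinuousLinearMap.toLinearMap₁₂ B) (B' := ContinuousLinearMap.toLinearMap₁₂ B.flip)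
    (by simpa using hB)
  simpa using congrArg (fun T => T a b) h

variable {D : ℕ}

theorem pd_add {f g : (Fin D → ℝ) → ℝ} {x : Fin D → ℝ} (hf : DifferentiableAt ℝ f x)
    (hg : DifferentiableAt ℝ g x) (μ : Fin D) :
    pd μ (fun y => f y + g y) x = pd μ f x + pd μ g x := by
  simp [pd, fderiv_fun_add hf hg]

theorem pd_sub {f g : (Fin D → ℝ) → ℝ} {x : Fin D → ℝ} (hf : DifferentiableAt ℝ f x)
    (hg : DifferentiableAt ℝ g x) (μ : Fin D) :
    pd μ (fun y => f y - g y) x = pd μ f x - pd μ g x := by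
  simp [pd, fderiv_fun_sub hf hg]

theorem pd_const_mul {f : (Fin D → ℝ) → ℝ} {x : Fin D → ℝ} (hf : DifferentiableAt ℝ f x)
    (c : ℝ) (μ : Fin D) : pd μ (fun y => c * f y) x = c * pd μ f x := by
  simp [pd, fderiv_const_mul hf]

theorem ContDiff.pd {f : (Fin D → ℝ) → ℝ} (hf : ContDiff ℝ ∞ f) (μ : Fin D) :
    ContDiff ℝ ∞ (pd μ f) :=
  (hf.fderiv_right le_rfl).clm_apply contDiff_const

theorem pd_comm {f : (Fin D → ℝ) → ℝ} {x : Fin D → ℝ} (hf : ContDiffAt ℝ 2 f x) (μ ν : Fin D) :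
    pd μ (pd ν f) x = pd ν (pd μ f) x := by
  have hdiff : DifferentiableAt ℝ (fderiv ℝ f) x :=
    (hf.fderiv_right (m := 1) le_rfl).differentiableAt one_ne_zero
  have hsecond : ∀ i j : Fin D,
      pd i (pd j f) x = fderiv ℝ (fderiv ℝ f) x (Pi.single i 1) (Pi.single j 1) := by
    intro i j
    change fderiv ℝ (fun y => fderiv ℝ f y (Pi.single j 1)) x (Pi.single i 1) = _
    rw [fderiv_clm_apply hdiff (differentiableAt_const _)]
    simp
  rw [hsecond, hsecond, (hf.isSymmSndFDerivAt (by simp)).eq]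

theorem exists_contDiff_pd_eq_of_pd_comm (v : Fin D → (Fin D → ℝ) → ℝ)
    (hv : ∀ γ, ContDiff ℝ ∞ (v γ)) (hclosed : ∀ α β x, pd α (v β) x = pd β (v α) x) :
    ∃ g, ContDiff ℝ ∞ g ∧ ∀ α x, pd α g x = v α x := by
  set θ : (Fin D → ℝ) → (Fin D → ℝ) →L[ℝ] ℝ :=
    fun x => ∑ γ, v γ x • ContinuousLinearMap.proj γ
  have hθ : ContDiff ℝ ∞ θ := ContDiff.sum fun γ _ => (hv γ).smul contDiff_const
  have hdθ : ∀ x, HasFDerivAt θ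
      (∑ γ, (fderiv ℝ (v γ) x).smulRight (ContinuousLinearMap.proj γ)) x := fun x =>
    HasFDerivAt.fun_sum fun γ _ =>
      (((hv γ).differentiable (by simp)) x).hasFDerivAt.smul_const
        (ContinuousLinearMap.proj (R := ℝ) (φ := fun _ : Fin D => ℝ) γ)
  have hsymm : ∀ x a b, fderiv ℝ θ x a b = fderiv ℝ θ x b a := fun x =>
    ContinuousLinearMap.apply_comm_of_apply_single_comm _ fun i j => by
      simpa [(hdθ x).fderiv, Pi.single_apply, pd] using hclosed i j x
  obtain ⟨g, hg⟩ := convex_univ.exists_forall_hasFDerivAt_of_fderiv_symmetric isOpen_univ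
    (hθ.differentiable (by simp)).differentiableOn fun x _ => hsymm x
  have hfderiv : fderiv ℝ g = θ := funext fun x => (hg x trivial).fderiv
  refine ⟨g, contDiff_infty_iff_fderiv.2 ⟨fun x => (hg x trivial).differentiableAt, hfderiv ▸ hθ⟩,
    fun α x => ?_⟩
  simp [pd, hfderiv, θ, Pi.single_apply]

theorem linRiemann_eq_pd_sub_pd {h : Fin D → Fin D → (Fin D → ℝ) → ℝ}
    (hsmooth : ∀ α β, ContDiff ℝ ∞ (h α β)) (μ ν α β : Fin D) (x : Fin D → ℝ) :
    linRiemann h μ ν α β x =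
      pd α (fun y => pd μ (h ν β) y - pd ν (h μ β) y) x
        - pd β (fun y => pd μ (h ν α) y - pd ν (h μ α) y) x := by
  have hd : ∀ γ δ ε, DifferentiableAt ℝ (pd γ (h δ ε)) x := fun γ δ ε =>
    (((hsmooth δ ε).pd γ).differentiable (by simp)) x
  have hcomm : ∀ γ δ ε ζ, pd γ (pd δ (h ε ζ)) x = pd δ (pd γ (h ε ζ)) x := fun γ δ ε ζ =>
    pd_comm ((hsmooth ε ζ).contDiffAt.of_le (WithTop.coe_le_coe.2 le_top)) γ δ
  rw [linRiemann, pd_sub (hd _ _ _) (hd _ _ _), pd_sub (hd _ _ _) (hd _ _ _),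
    hcomm α μ, hcomm α ν, hcomm β μ, hcomm β ν]
  ring

theorem exists_antisymm_potential_of_pd_comm (v : Fin D → Fin D → Fin D → (Fin D → ℝ) → ℝ)
    (hv : ∀ μ ν γ, ContDiff ℝ ∞ (v μ ν γ)) (hanti : ∀ μ ν γ x, v ν μ γ x = -v μ ν γ x)
    (hclosed : ∀ μ ν α β x, pd α (v μ ν β) x = pd β (v μ ν α) x) :
    ∃ m : Fin D → Fin D → (Fin D → ℝ) → ℝ, (∀ μ ν, ContDiff ℝ ∞ (m μ ν)) ∧
      (∀ μ ν x, m ν μ x = -m μ ν x) ∧ ∀ μ ν γ x, pd γ (m μ ν) x = v μ ν γ x := by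
  choose g hg hgpd using fun μ ν =>
    exists_contDiff_pd_eq_of_pd_comm (v μ ν) (hv μ ν) (hclosed μ ν)
  have hgd : ∀ μ ν, Differentiable ℝ (g μ ν) := fun μ ν => (hg μ ν).differentiable (by simp)
  refine ⟨fun μ ν x => 2⁻¹ * (g μ ν x - g ν μ x),
    fun μ ν => contDiff_const.mul ((hg μ ν).sub (hg ν μ)), fun μ ν x => by ring,
    fun μ ν γ x => ?_⟩
  rw [pd_const_mul (by fun_prop), pd_sub (hgd _ _ x) (hgd _ _ x), hgpd, hgpd, hanti]
  ring

theorem exists_pure_gauge_of_antisymm_potential {h : Fin D → Fin D → (Fin D → ℝ) → ℝ}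
    (hsmooth : ∀ α β, ContDiff ℝ ∞ (h α β)) (hsym : ∀ α β, h α β = h β α)
    {m : Fin D → Fin D → (Fin D → ℝ) → ℝ} (hm : ∀ μ ν, ContDiff ℝ ∞ (m μ ν))
    (hanti : ∀ μ ν x, m ν μ x = -m μ ν x)
    (hm_pd : ∀ μ ν γ x, pd γ (m μ ν) x = pd μ (h ν γ) x - pd ν (h μ γ) x) :
    ∃ ξ : Fin D → (Fin D → ℝ) → ℝ, (∀ α, ContDiff ℝ ∞ (ξ α)) ∧
      ∀ α β x, h α β x = pd α (ξ β) x + pd β (ξ α) x := by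
  have hhd : ∀ α β, Differentiable ℝ (h α β) := fun α β => (hsmooth α β).differentiable (by simp)
  have hmd : ∀ μ ν, Differentiable ℝ (m μ ν) := fun μ ν => (hm μ ν).differentiable (by simp)
  have hclosed : ∀ β α μ x, pd α (fun y => 2⁻¹ * (h μ β y + m μ β y)) x
      = pd μ (fun y => 2⁻¹ * (h α β y + m α β y)) x := by
    intro β α μ x
    rw [pd_const_mul (by fun_prop), pd_add (hhd _ _ x) (hmd _ _ x), hm_pd,
      pd_const_mul (by fun_prop), pd_add (hhd _ _ x) (hmd _ _ x), hm_pd,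
      hsym μ β, hsym α β, hsym μ α]
    ring
  choose ξ hξ hξpd using fun β => exists_contDiff_pd_eq_of_pd_comm
    (fun μ y => 2⁻¹ * (h μ β y + m μ β y))
    (fun μ => contDiff_const.mul ((hsmooth μ β).add (hm μ β))) (hclosed β)
  refine ⟨ξ, hξ, fun α β x => ?_⟩
  rw [hξpd, hξpd, hanti, hsym β α]
  ring

theorem spin_two_zero_curvature_is_pure_gauge_general (D : ℕ)
    (h : Fin D → Fin D → (Fin D → ℝ) → ℝ)
    (hsmooth : ∀ α β, ContDiff ℝ (⊤ : ℕ∞) (h α β))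
    (hsym : ∀ α β, h α β = h β α)
    (hflat : ∀ μ ν α β x, linRiemann h μ ν α β x = 0) :
    ∃ ξ : Fin D → (Fin D → ℝ) → ℝ, (∀ α, ContDiff ℝ (⊤ : ℕ∞) (ξ α)) ∧
      ∀ α β x, h α β x = pd α (ξ β) x + pd β (ξ α) x := by
  have hclosed : ∀ μ ν α β x, pd α (fun y => pd μ (h ν β) y - pd ν (h μ β) y) x
      = pd β (fun y => pd μ (h ν α) y - pd ν (h μ α) y) x := fun μ ν α β x => by
    rw [← sub_eq_zero, ← linRiemann_eq_pd_sub_pd hsmooth, hflat]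
  obtain ⟨m, hm, hanti, hm_pd⟩ := exists_antisymm_potential_of_pd_comm
    (fun μ ν γ x => pd μ (h ν γ) x - pd ν (h μ γ) x)
    (fun μ ν γ => ((hsmooth ν γ).pd μ).sub ((hsmooth μ γ).pd ν))
    (fun μ ν γ x => by ring) hclosed
  exact exists_pure_gauge_of_antisymm_potential hsmooth hsym hm hanti hm_pd

/-- A smooth symmetric tensor field `h_{αβ}` on `ℝ^D` whose linearized Riemann
tensor vanishes identically is pure gauge: `h_{αβ} = ∂_α ξ_β + ∂_β ξ_α`. -/
theorem spin_two_zero_curvature_is_pure_gauge (D : ℕ) (hD : 1 ≤ D)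
    (h : Fin D → Fin D → (Fin D → ℝ) → ℝ)
    (hsmooth : ∀ α β, ContDiff ℝ (⊤ : ℕ∞) (h α β))
    (hsym : ∀ α β, h α β = h β α)
    (hflat : ∀ μ ν α β x, linRiemann h μ ν α β x = 0) :
    ∃ ξ : Fin D → (Fin D → ℝ) → ℝ, (∀ α, ContDiff ℝ (⊤ : ℕ∞) (ξ α)) ∧
      ∀ α β x, h α β x = pd α (ξ β) x + pd β (ξ α) x :=
  spin_two_zero_curvature_is_pure_gauge_general D h hsmooth hsym hflat
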